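/- arXiv:1310.2935 — 2 statements merged into one kernel-verified Lean document; each statement's English description precedes it below -/
import Mathlib

section
/- In a finite MDP, if μ₀ is limit-sure eventually synchronizing in R with support in Z, and R = Pre^k(T), Z = Pre^k(U) with T ⊆ U, then μ₀ is limit-sure eventually synchronizing in T with support in U. -/
open Finset

structure MDP (Q A : Type) [Fintype Q] [Fintype A] where
  δ : Q → A → Q → ℝ
  nonneg : ∀ q a q', 0 ≤ δ q a q'
  sum_one : ∀ q a, ∑ q', δ q a q' = 1

structure Strat (Q A : Type) [Fintype A] where
  σ : List Q → A → ℝ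
  nonneg : ∀ h a, 0 ≤ σ h a
  sum_one : ∀ h, ∑ a, σ h a = 1

variable {Q A : Type} [Fintype Q] [DecidableEq Q] [Fintype A]

/-- Probability of a path of length `n` (i.e. `n+1` states) from initial
distribution `μ0` under strategy `α`. The history passed to the strategy is
the list of visited states, most recent first. -/
noncomputable def pathProb (M : MDP Q A) (μ0 : Q → ℝ) (α : Strat Q A)
    {n : ℕ} (π : Fin (n + 1) → Q) : ℝ :=
  μ0 (π 0) *
    ∏ i : Fin n,
      ∑ a,
        α.σ (List.ofFn (fun j : Fin (i.1 + 1) =>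
            π ⟨i.1 - j.1, lt_of_le_of_lt (Nat.sub_le i.1 j.1) (Nat.lt_succ_of_lt i.isLt)⟩)) a *
          M.δ (π i.castSucc) a (π i.succ)

/-- Distribution over states after `n` steps. -/
noncomputable def Mdist (M : MDP Q A) (μ0 : Q → ℝ) (α : Strat Q A) (n : ℕ) (q : Q) : ℝ :=
  ∑ π : Fin (n + 1) → Q, if π (Fin.last n) = q then pathProb M μ0 α π else 0

/-- Probability mass in `T` after `n` steps. -/
noncomputable def Mmass (M : MDP Q A) (μ0 : Q → ℝ) (α : Strat Q A) (n : ℕ) (T : Finset Q) : ℝ :=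
  ∑ q ∈ T, Mdist M μ0 α n q

open scoped Classical in
/-- Support of the transition `δ(q,a)`. -/
noncomputable def post (M : MDP Q A) (q : Q) (a : A) : Finset Q :=
  Finset.univ.filter (fun q' => 0 < M.δ q a q')

open scoped Classical in
/-- One-step predecessor operator. -/
noncomputable def PreM (M : MDP Q A) (S : Finset Q) : Finset Q :=
  Finset.univ.filter (fun q => ∃ a, post M q a ⊆ S)

def IsDist (μ : Q → ℝ) : Prop := (∀ q, 0 ≤ μ q) ∧ ∑ q, μ q = 1

def dirac (q0 : Q) : Q → ℝ := fun q => if q = q0 then (1 : ℝ) else 0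

def PureStrat (α : Strat Q A) : Prop := ∀ h, ∃ a, α.σ h a = 1


/-! From a state of `Pre^(j+1) S` some action sends all of its mass into `Pre^j S`. After the
given strategy has put mass `≥ 1 - ε` in `Pre^k T` and all of it in `Pre^k U`, play for `k` more
steps, in a state of `Pre^(j+1) T`, an action leading into `Pre^j T`, and otherwise one leading
into `Pre^j U`. Since `T ⊆ U`, the first choice also keeps `Pre^(j+1) U` inside `Pre^j U`, so at
each step the mass in the current `Pre^j T` does not decrease and the mass in `Pre^j U` stays 1. -/

theorem Fin.take_snoc_of_le {α : Type*} {n : ℕ} (v : Fin n → α) (x : α) (i : ℕ)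
    (h : i ≤ n) (h' : i ≤ n + 1) :
    Fin.take i h' (Fin.snoc v x : Fin (n + 1) → α) = Fin.take i h v := by
  rw [← Fin.take_init, Fin.init_snoc]

theorem Fintype.sum_tuple_succ_eq_sum_snoc {α R : Type*} [Fintype α] [AddCommMonoid R] {n : ℕ}
    (f : (Fin (n + 1) → α) → R) :
    ∑ π, f π = ∑ ρ : Fin n → α, ∑ x, f (Fin.snoc ρ x) := by
  rw [← (Fin.snocEquiv fun _ => α).sum_comp f, Fintype.sum_prod_type, Finset.sum_comm]
  rfl

section PathProb

omit [DecidableEq Q]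

def history {m : ℕ} (ρ : Fin (m + 1) → Q) : List Q :=
  List.ofFn fun j : Fin (m + 1) => ρ ⟨m - j, by omega⟩

noncomputable def stepProb (M : MDP Q A) (β : Strat Q A) {m : ℕ} (ρ : Fin (m + 1) → Q)
    (q : Q) : ℝ :=
  ∑ a, β.σ (history ρ) a * M.δ (ρ (Fin.last m)) a q

theorem pathProb_eq_mul_prod_stepProb (M : MDP Q A) (μ0 : Q → ℝ) (β : Strat Q A) {n : ℕ}
    (π : Fin (n + 1) → Q) :
    pathProb M μ0 β π =
      μ0 (π 0) * ∏ i : Fin n, stepProb M β (Fin.take (i + 1) (by omega) π) (π i.succ) :=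
  rfl

theorem pathProb_snoc (M : MDP Q A) (μ0 : Q → ℝ) (β : Strat Q A) {m : ℕ}
    (ρ : Fin (m + 1) → Q) (q : Q) :
    pathProb M μ0 β (Fin.snoc ρ q) = pathProb M μ0 β ρ * stepProb M β ρ q := by
  rw [pathProb_eq_mul_prod_stepProb, pathProb_eq_mul_prod_stepProb, Fin.prod_univ_castSucc,
    ← Fin.castSucc_zero, Fin.snoc_castSucc]
  simp (disch := omega) only [Fin.val_castSucc, Fin.val_last, Fin.take_snoc_of_le,
    Fin.succ_castSucc, Fin.snoc_castSucc, Fin.succ_last, Fin.snoc_last, Fin.take_eq_self]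
  ring

theorem sum_stepProb (M : MDP Q A) (β : Strat Q A) {m : ℕ} (ρ : Fin (m + 1) → Q) :
    ∑ q, stepProb M β ρ q = 1 := by
  simp only [stepProb]
  rw [Finset.sum_comm]
  simp only [← Finset.mul_sum, M.sum_one, mul_one, β.sum_one]

theorem stepProb_nonneg (M : MDP Q A) (β : Strat Q A) {m : ℕ} (ρ : Fin (m + 1) → Q) (q : Q) :
    0 ≤ stepProb M β ρ q :=
  Finset.sum_nonneg fun _ _ => mul_nonneg (β.nonneg _ _) (M.nonneg _ _ _)

theorem pathProb_nonneg (M : MDP Q A) {μ0 : Q → ℝ} (hμ0 : ∀ q, 0 ≤ μ0 q) (β : Strat Q A)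
    {n : ℕ} (π : Fin (n + 1) → Q) : 0 ≤ pathProb M μ0 β π :=
  mul_nonneg (hμ0 _) <| Finset.prod_nonneg fun i _ =>
    stepProb_nonneg M β (Fin.take (i + 1) (by omega) π) _

theorem pathProb_congr (M : MDP Q A) (μ0 : Q → ℝ) {β γ : Strat Q A} {n : ℕ}
    (hβγ : ∀ h : List Q, h.length ≤ n → β.σ h = γ.σ h) (π : Fin (n + 1) → Q) :
    pathProb M μ0 β π = pathProb M μ0 γ π := by
  unfold pathProb
  congr! 3 with i
  rw [hβγ _ (by rw [List.length_ofFn]; exact i.isLt)]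

end PathProb

section Mass

variable (M : MDP Q A) (μ0 : Q → ℝ) (β : Strat Q A)

theorem Mmass_eq_sum_pathProb (m : ℕ) (S : Finset Q) :
    Mmass M μ0 β m S =
      ∑ π : Fin (m + 1) → Q, if π (Fin.last m) ∈ S then pathProb M μ0 β π else 0 := by
  simp only [Mmass, Mdist]
  rw [Finset.sum_comm]
  simp only [Finset.sum_ite_eq]

theorem Mmass_succ (m : ℕ) (S : Finset Q) :
    Mmass M μ0 β (m + 1) S =
      ∑ ρ : Fin (m + 1) → Q, pathProb M μ0 β ρ * ∑ q ∈ S, stepProb M β ρ q := by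
  rw [Mmass_eq_sum_pathProb, Fintype.sum_tuple_succ_eq_sum_snoc]
  simp only [Fin.snoc_last, pathProb_snoc, Finset.mul_sum, ← Finset.sum_filter,
    Finset.filter_mem_eq_inter, Finset.univ_inter]

theorem Mmass_zero (S : Finset Q) : Mmass M μ0 β 0 S = ∑ q ∈ S, μ0 q := by
  rw [Mmass_eq_sum_pathProb, ← (Equiv.funUnique (Fin 1) Q).symm.sum_comp]
  simp [pathProb_eq_mul_prod_stepProb, Finset.sum_ite_mem]

theorem Mmass_univ (m : ℕ) : Mmass M μ0 β m univ = ∑ q, μ0 q := by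
  induction m with
  | zero => exact Mmass_zero M μ0 β univ
  | succ m ih =>
    rw [Mmass_succ, ← ih, Mmass_eq_sum_pathProb]
    simp only [sum_stepProb, mul_one, Finset.mem_univ, if_true]

theorem Mmass_le_one (hμ0 : IsDist μ0) (m : ℕ) (S : Finset Q) : Mmass M μ0 β m S ≤ 1 := by
  rw [← hμ0.2, ← Mmass_univ M μ0 β m]
  refine Finset.sum_le_sum_of_subset_of_nonneg (Finset.subset_univ S) fun q _ _ => ?_
  exact Finset.sum_nonneg fun π _ => by split <;> simp [pathProb_nonneg M hμ0.1]

theorem Mmass_congr {γ : Strat Q A} {m : ℕ}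
    (hβγ : ∀ h : List Q, h.length ≤ m → β.σ h = γ.σ h) (S : Finset Q) :
    Mmass M μ0 β m S = Mmass M μ0 γ m S := by
  simp only [Mmass_eq_sum_pathProb, pathProb_congr M μ0 hβγ]

theorem Mmass_le_Mmass_succ (hμ0 : ∀ q, 0 ≤ μ0 q) {m : ℕ} {S S' : Finset Q}
    (hstep : ∀ ρ : Fin (m + 1) → Q,
      ρ (Fin.last m) ∈ S → ∑ q ∈ S', stepProb M β ρ q = 1) :
    Mmass M μ0 β m S ≤ Mmass M μ0 β (m + 1) S' := by
  rw [Mmass_eq_sum_pathProb, Mmass_succ]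
  refine Finset.sum_le_sum fun ρ _ => ?_
  split_ifs with hρ
  · rw [hstep ρ hρ, mul_one]
  · exact mul_nonneg (pathProb_nonneg M hμ0 β ρ)
      (Finset.sum_nonneg fun q _ => stepProb_nonneg M β ρ q)

theorem Mmass_le_Mmass_add (hμ0 : ∀ q, 0 ≤ μ0 q) {n : ℕ} (S : ℕ → Finset Q) (j : ℕ)
    (hstep : ∀ i < j, ∀ ρ : Fin (n + i + 1) → Q,
      ρ (Fin.last _) ∈ S i → ∑ q ∈ S (i + 1), stepProb M β ρ q = 1) :
    Mmass M μ0 β n (S 0) ≤ Mmass M μ0 β (n + j) (S j) := by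
  induction j with
  | zero => rfl
  | succ j ih =>
    exact (ih fun i hi => hstep i (by omega)).trans
      (Mmass_le_Mmass_succ M μ0 β hμ0 (hstep j j.lt_succ_self))

end Mass

theorem mem_PreM {M : MDP Q A} {S : Finset Q} {q : Q} :
    q ∈ PreM M S ↔ ∃ a, post M q a ⊆ S := by
  simp [PreM]

theorem PreM_monotone (M : MDP Q A) : Monotone (PreM M) := fun _ _ hSS' _ hq =>
  let ⟨a, ha⟩ := mem_PreM.mp hq
  mem_PreM.mpr ⟨a, ha.trans hSS'⟩

omit [DecidableEq Q] in
theorem sum_δ_eq_one_of_post_subset {M : MDP Q A} {q : Q} {a : A} {S : Finset Q}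
    (h : post M q a ⊆ S) : ∑ q' ∈ S, M.δ q a q' = 1 := by
  rw [← M.sum_one q a]
  refine Finset.sum_subset (Finset.subset_univ S) fun q' _ hq' => ?_
  by_contra hne
  exact hq' (h (by simp [post, lt_of_le_of_ne (M.nonneg q a q') (Ne.symm hne)]))

section FollowThen

omit [DecidableEq Q]

omit [Fintype Q] in
theorem Strat.nonempty_action (α : Strat Q A) : Nonempty A := by
  obtain ⟨a, -, -⟩ := Finset.exists_ne_zero_of_sum_ne_zero (α.sum_one [] ▸ one_ne_zero)
  exact ⟨a⟩

variable [DecidableEq A]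

-- Follow `α` for `n` steps, then at step `n + i` (history `q :: t` with `t.length = n + i`)
-- play `f i q`.
def Strat.followThen (α : Strat Q A) (n : ℕ) (f : ℕ → Q → A) : Strat Q A where
  σ
    | q :: t, a =>
      if n ≤ t.length then (if a = f (t.length - n) q then 1 else 0) else α.σ (q :: t) a
    | [], a => α.σ [] a
  nonneg
    | q :: t, a => by dsimp only; split_ifs <;> simp [α.nonneg]
    | [], a => α.nonneg [] a
  sum_one
    | q :: t => by dsimp only; split_ifs <;> simp [α.sum_one]
    | [] => α.sum_one []

omit [Fintype Q] in
theorem Strat.followThen_σ_of_length_le (α : Strat Q A) {n : ℕ} (f : ℕ → Q → A)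
    {h : List Q} (hh : h.length ≤ n) : (α.followThen n f).σ h = α.σ h := by
  funext a
  match h, hh with
  | q :: t, hh => simp [Strat.followThen, show ¬ n ≤ t.length by simp at hh; omega]
  | [], _ => rfl

theorem stepProb_followThen (M : MDP Q A) (α : Strat Q A) (n : ℕ) (f : ℕ → Q → A) {i : ℕ}
    (ρ : Fin (n + i + 1) → Q) (q : Q) :
    stepProb M (α.followThen n f) ρ q = M.δ (ρ (Fin.last _)) (f i (ρ (Fin.last _))) q := by
  have hhist : history ρ =
      ρ (Fin.last _) :: List.ofFn fun j : Fin (n + i) => ρ ⟨n + i - (j + 1), by omega⟩ :=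
    List.ofFn_succ
  simp [stepProb, Strat.followThen, hhist]

end FollowThen

section Descent

variable [Nonempty A] (M : MDP Q A)

noncomputable def safeAction (S : Finset Q) (q : Q) : A :=
  Classical.epsilon fun a => post M q a ⊆ S

theorem post_safeAction_subset {S : Finset Q} {q : Q} (hq : q ∈ PreM M S) :
    post M q (safeAction M S q) ⊆ S :=
  Classical.epsilon_spec (mem_PreM.mp hq)

noncomputable def descentAction (T U : Finset Q) (j : ℕ) (q : Q) : A :=
  if q ∈ (PreM M)^[j + 1] T then safeAction M ((PreM M)^[j] T) q
  else safeAction M ((PreM M)^[j] U) q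

theorem post_descentAction_subset_left {T U : Finset Q} {j : ℕ} {q : Q}
    (hq : q ∈ (PreM M)^[j + 1] T) : post M q (descentAction M T U j q) ⊆ (PreM M)^[j] T := by
  rw [descentAction, if_pos hq]
  exact post_safeAction_subset M (by rwa [Function.iterate_succ_apply'] at hq)

theorem post_descentAction_subset_right {T U : Finset Q} (hTU : T ⊆ U) {j : ℕ} {q : Q}
    (hq : q ∈ (PreM M)^[j + 1] U) : post M q (descentAction M T U j q) ⊆ (PreM M)^[j] U := by
  by_cases hqT : q ∈ (PreM M)^[j + 1] T
  · exact (post_descentAction_subset_left M hqT).trans ((PreM_monotone M).iterate j hTU)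
  · rw [descentAction, if_neg hqT]
    exact post_safeAction_subset M (by rwa [Function.iterate_succ_apply'] at hq)

end Descent

theorem Mmass_iterate_PreM_le_followThen [DecidableEq A] (M : MDP Q A) {μ0 : Q → ℝ}
    (hμ0 : ∀ q, 0 ≤ μ0 q) (α : Strat Q A) (n k : ℕ) (g : ℕ → Q → A) {S : Finset Q}
    (hg : ∀ j, ∀ q ∈ (PreM M)^[j + 1] S, post M q (g j q) ⊆ (PreM M)^[j] S) :
    Mmass M μ0 α n ((PreM M)^[k] S) ≤
      Mmass M μ0 (α.followThen n fun i => g (k - 1 - i)) (n + k) S := by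
  rw [Mmass_congr M μ0 α fun h hh => (α.followThen_σ_of_length_le _ hh).symm]
  have := Mmass_le_Mmass_add M μ0 _ hμ0 (fun i => (PreM M)^[k - i] S) k fun i hi ρ hρ => by
    rw [Finset.sum_congr rfl fun q _ => stepProb_followThen M α n _ ρ q]
    refine sum_δ_eq_one_of_post_subset ?_
    rw [show k - (i + 1) = k - 1 - i by omega]
    exact hg _ _ (by rwa [show k - 1 - i + 1 = k - i by omega])
  simpa using this

theorem limit_sure_of_pre_limit_sure_general {Q A : Type} [Fintype Q] [DecidableEq Q]
    [Fintype A]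
    (M : MDP Q A) (T U : Finset Q) (hTU : T ⊆ U)
    (μ0 : Q → ℝ) (hμ0 : IsDist μ0) (k : ℕ)
    (h : ∀ ε : ℝ, 0 < ε → ∃ (α : Strat Q A) (n : ℕ),
        1 - ε ≤ Mmass M μ0 α n ((PreM M)^[k] T) ∧
          Mmass M μ0 α n ((PreM M)^[k] U) = 1) :
    ∀ ε : ℝ, 0 < ε → ∃ (α : Strat Q A) (n : ℕ),
      1 - ε ≤ Mmass M μ0 α n T ∧ Mmass M μ0 α n U = 1 := by
  classical
  intro ε hε
  obtain ⟨α, n, hT, hU⟩ := h ε hε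
  have : Nonempty A := α.nonempty_action
  refine ⟨α.followThen n fun i => descentAction M T U (k - 1 - i), n + k, ?_, ?_⟩
  · exact hT.trans <| Mmass_iterate_PreM_le_followThen M hμ0.1 α n k _
      fun _ _ => post_descentAction_subset_left M
  · refine le_antisymm (Mmass_le_one M μ0 _ hμ0 (n + k) U) ?_
    exact hU ▸ Mmass_iterate_PreM_le_followThen M hμ0.1 α n k _
      fun _ _ => post_descentAction_subset_right M hTU

/-- If `μ0` is limit-sure eventually synchronizing in `R = Pre^k(T)` with support in
`Z = Pre^k(U)` (with `T ⊆ U`), then `μ0` is limit-sure eventually synchronizing in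
`T` with support in `U`. -/
theorem limit_sure_of_pre_limit_sure {Q A : Type} [Fintype Q] [DecidableEq Q]
    [Fintype A] [Nonempty Q] [Nonempty A]
    (M : MDP Q A) (T U : Finset Q) (hTU : T ⊆ U)
    (μ0 : Q → ℝ) (hμ0 : IsDist μ0) (k : ℕ)
    (h : ∀ ε : ℝ, 0 < ε → ∃ (α : Strat Q A) (n : ℕ),
        1 - ε ≤ Mmass M μ0 α n ((PreM M)^[k] T) ∧
          Mmass M μ0 α n ((PreM M)^[k] U) = 1) :
    ∀ ε : ℝ, 0 < ε → ∃ (α : Strat Q A) (n : ℕ),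
      1 - ε ≤ Mmass M μ0 α n T ∧ Mmass M μ0 α n U = 1 :=
  limit_sure_of_pre_limit_sure_general M T U hTU μ0 hμ0 k h
end

section
/- There is an MDP that is almost-sure winning for eventually synchronizing in a target state but for which no finite-memory strategy is almost-sure winning: in the 3-state MDP with states q₀, q₁, q₂, actions a, b, where from q₀ both actions go to q₀ or q₁ with probability 1/2 each, from q₁ action a self-loops and action b goes to q₂, and from q₂ both actions go to q₀, every finite-memory strategy α satisfies sup_n M^α_n({q₂}) < 1, while some infinite-memory strategy achieves sup_n M^α_n({q₂}) = 1. -/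
open Finset

variable {Q A : Type} [Fintype Q] [DecidableEq Q] [Fintype A]

/-- A strategy is finite-memory if it is computed by a finite transducer reading
the history of visited states. -/
def FinMem {Q A : Type} [Fintype A] (α : Strat Q A) : Prop :=
  ∃ (m : ℕ) (u : Fin (m + 1) → Q → Fin (m + 1)) (m0 : Fin (m + 1))
    (g : Fin (m + 1) → A → ℝ),
    ∀ h : List Q, α.σ h = g (h.reverse.foldl u m0)

/-!
For a finite-memory strategy, the mass in q₂ at time n comes from runs that entered q₁ at
some earlier time t and then played a for n - 2 - t steps before playing b. Inside q₁ the memory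
evolves by the fixed map `m ↦ u m q₁`, whose iterates are eventually periodic (pre-period K,
period d), so a run older than K + d is no more likely to exit now than d steps earlier. Hence
the q₂-mass at time n is at most the q₂-mass at time n - d plus the mass that entered q₁ during
the last K + d steps. Both are at most a constant multiple C of the q₀-mass at time n, because the
q₀-mass at most halves in one step and receives all of the q₂-mass. As the q₀- and q₂-masses sum
to at most 1, the q₂-mass stays below C / (1 + C).

The infinite-memory strategy plays b exactly when the history length is a power of 2. Along a
block of a-steps the quantity (q₀-mass) + 2 (q₂-mass) halves at every step, so at the end of a
long block almost all the mass is in q₁, and the next b moves it to q₂.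
-/

lemma List.ofFn_rev_eq_reverse {Q : Type} {n : ℕ} (π : Fin (n + 1) → Q) :
    List.ofFn (fun j : Fin (n + 1) =>
      π ⟨n - j.1, lt_of_le_of_lt (Nat.sub_le n j.1) (Nat.lt_succ_self n)⟩) =
      (List.ofFn π).reverse := by
  apply List.ext_getElem (by simp)
  intro i h₁ h₂
  rw [List.getElem_ofFn, List.getElem_reverse, List.getElem_ofFn]
  congr 1
  ext
  simp only [List.length_ofFn] at h₁ ⊢
  omega

lemma Fintype.sum_fin_succ_pi {Q : Type} [Fintype Q] {n : ℕ} (F : (Fin (n + 2) → Q) → ℝ) :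
    ∑ ρ, F ρ = ∑ π : Fin (n + 1) → Q, ∑ x, F (Fin.snoc π x) := by
  rw [← (Fin.snocEquiv fun _ => Q).sum_comp, Fintype.sum_prod_type, Finset.sum_comm]
  rfl

lemma List.foldl_ofFn_snoc {Q Mem : Type} (u : Mem → Q → Mem) (m₀ : Mem) {n : ℕ}
    (π : Fin (n + 1) → Q) (x : Q) :
    (List.ofFn (Fin.snoc π x : Fin (n + 2) → Q)).foldl u m₀ = u ((List.ofFn π).foldl u m₀) x := by
  rw [List.ofFn_succ']
  simp only [Fin.snoc_castSucc, Fin.snoc_last, List.concat_eq_append, List.foldl_append,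
    List.foldl_cons, List.foldl_nil]

lemma Function.exists_iterate_add_eq {Mem : Type} [Finite Mem] (o : Mem → Mem) :
    ∃ K d, 0 < d ∧ ∀ k, K ≤ k → o^[k + d] = o^[k] := by
  obtain ⟨i, j, hij, h⟩ := Finite.exists_ne_map_eq_of_infinite fun k : ℕ => o^[k]
  wlog hlt : i < j generalizing i j
  · exact this j i hij.symm h.symm (lt_of_le_of_ne (not_lt.1 hlt) hij.symm)
  refine ⟨i, j - i, by omega, fun k hk => ?_⟩
  obtain ⟨l, rfl⟩ := Nat.exists_eq_add_of_le hk
  have : i + l + (j - i) = l + j := by omega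
  rw [this, Function.iterate_add, add_comm i, Function.iterate_add]
  exact congrArg _ h.symm

lemma IsDist.le_one {Q : Type} [Fintype Q] {μ : Q → ℝ} (hμ : IsDist μ) (q : Q) : μ q ≤ 1 :=
  hμ.2 ▸ Finset.single_le_sum (fun i _ => hμ.1 i) (Finset.mem_univ q)

lemma isDist_dirac {Q : Type} [Fintype Q] [DecidableEq Q] (q₀ : Q) : IsDist (dirac q₀) :=
  ⟨fun q => by unfold dirac; split_ifs <;> norm_num, by simp [dirac]⟩

lemma Strat.isDist {Q A : Type} [Fintype A] (α : Strat Q A) (h : List Q) : IsDist (α.σ h) :=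
  ⟨α.nonneg h, α.sum_one h⟩

section Paths

variable {Q A : Type} [Fintype Q] [Fintype A] (M : MDP Q A) (μ : Q → ℝ) (α : Strat Q A)

lemma pathProb_snoc_s15 {n : ℕ} (π : Fin (n + 1) → Q) (x : Q) :
    pathProb M μ α (Fin.snoc π x : Fin (n + 2) → Q) =
      pathProb M μ α π *
        ∑ a, α.σ (List.ofFn π).reverse a * M.δ (π (Fin.last n)) a x := by
  have key : ∀ ρ : Fin (n + 2) → Q, pathProb M μ α ρ = pathProb M μ α (Fin.init ρ) *
      ∑ a, α.σ (List.ofFn (Fin.init ρ)).reverse a *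
        M.δ (ρ (Fin.last n).castSucc) a (ρ (Fin.last (n + 1))) := by
    intro ρ
    rw [← List.ofFn_rev_eq_reverse]
    unfold pathProb
    rw [Fin.prod_univ_castSucc, ← mul_assoc]
    rfl
  rw [key, Fin.init_snoc, Fin.snoc_last, Fin.snoc_castSucc]

lemma pathProb_nonneg_s15 {μ : Q → ℝ} (hμ : ∀ q, 0 ≤ μ q) {n : ℕ} (π : Fin (n + 1) → Q) :
    0 ≤ pathProb M μ α π :=
  mul_nonneg (hμ _) <| Finset.prod_nonneg fun _ _ =>
    Finset.sum_nonneg fun _ _ => mul_nonneg (α.nonneg _ _) (M.nonneg _ _ _)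

noncomputable def pathExp (n : ℕ) (F : (Fin (n + 1) → Q) → ℝ) : ℝ :=
  ∑ π, pathProb M μ α π * F π

lemma pathExp_zero (F : (Fin 1 → Q) → ℝ) :
    pathExp M μ α 0 F = ∑ q, μ q * F (fun _ => q) := by
  rw [pathExp, ← (Equiv.funUnique (Fin 1) Q).symm.sum_comp]
  simp [pathProb]
  rfl

lemma pathExp_succ {n : ℕ} (F : (Fin (n + 2) → Q) → ℝ) :
    pathExp M μ α (n + 1) F = pathExp M μ α n fun π =>
      ∑ x, (∑ a, α.σ (List.ofFn π).reverse a * M.δ (π (Fin.last n)) a x) * F (Fin.snoc π x) := by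
  unfold pathExp
  rw [Fintype.sum_fin_succ_pi]
  refine Finset.sum_congr rfl fun π _ => ?_
  rw [Finset.mul_sum]
  refine Finset.sum_congr rfl fun x _ => ?_
  rw [pathProb_snoc_s15, mul_assoc]

lemma pathExp_add {n : ℕ} (F G : (Fin (n + 1) → Q) → ℝ) :
    pathExp M μ α n (F + G) = pathExp M μ α n F + pathExp M μ α n G := by
  simp only [pathExp, Pi.add_apply, mul_add, Finset.sum_add_distrib]

lemma pathExp_mono {μ : Q → ℝ} (hμ : ∀ q, 0 ≤ μ q) {n : ℕ} {F G : (Fin (n + 1) → Q) → ℝ}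
    (h : ∀ π, F π ≤ G π) : pathExp M μ α n F ≤ pathExp M μ α n G :=
  Finset.sum_le_sum fun π _ => mul_le_mul_of_nonneg_left (h π) (pathProb_nonneg_s15 M α hμ π)

lemma pathExp_one {μ : Q → ℝ} (hμ : IsDist μ) (n : ℕ) : pathExp M μ α n (fun _ => 1) = 1 := by
  induction n with
  | zero => simpa [pathExp_zero] using hμ.2
  | succ n ih =>
    rw [pathExp_succ]
    refine (congrArg _ (funext fun π => ?_)).trans ih
    simp only [mul_one]
    rw [Finset.sum_comm]
    simp only [← Finset.mul_sum, M.sum_one, mul_one, α.sum_one]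

variable [DecidableEq Q]

lemma Mdist_eq_pathExp (n : ℕ) (q : Q) :
    Mdist M μ α n q = pathExp M μ α n fun π => if π (Fin.last n) = q then 1 else 0 := by
  simp only [Mdist, pathExp, mul_ite, mul_one, mul_zero]

lemma pathExp_comp_last {n : ℕ} (f : Q → ℝ) :
    pathExp M μ α n (fun π => f (π (Fin.last n))) = ∑ q, Mdist M μ α n q * f q := by
  simp only [Mdist, pathExp, ite_mul, zero_mul, Finset.sum_mul]
  rw [Finset.sum_comm]
  simp

lemma Mdist_succ_eq_sum {n : ℕ} {q' : Q} (κ : Q → ℝ)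
    (hκ : ∀ π : Fin (n + 1) → Q,
      ∑ a, α.σ (List.ofFn π).reverse a * M.δ (π (Fin.last n)) a q' = κ (π (Fin.last n))) :
    Mdist M μ α (n + 1) q' = ∑ q, Mdist M μ α n q * κ q := by
  rw [Mdist_eq_pathExp, pathExp_succ, ← pathExp_comp_last]
  congr 1
  funext π
  simp only [Fin.snoc_last, mul_ite, mul_one, mul_zero, Finset.sum_ite_eq', Finset.mem_univ,
    if_true, hκ]

lemma Mdist_nonneg {μ : Q → ℝ} (hμ : ∀ q, 0 ≤ μ q) (n : ℕ) (q : Q) : 0 ≤ Mdist M μ α n q :=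
  Finset.sum_nonneg fun π _ => ite_nonneg (pathProb_nonneg_s15 M α hμ π) le_rfl

lemma sum_Mdist {μ : Q → ℝ} (hμ : IsDist μ) (n : ℕ) : ∑ q, Mdist M μ α n q = 1 := by
  simpa using (pathExp_comp_last M μ α (n := n) fun _ => 1).symm.trans (pathExp_one M α hμ n)

lemma Mdist_zero (q : Q) : Mdist M μ α 0 q = μ q := by
  simp [Mdist_eq_pathExp, pathExp_zero]

end Paths

section FiniteMemory

variable {Q A Mem : Type} [Fintype Q] [Fintype A] (M : MDP Q A) (μ : Q → ℝ) (α : Strat Q A)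
  (u : Mem → Q → Mem) (m₀ : Mem)

noncomputable def memExp (n : ℕ) (φ : Q → Mem → ℝ) : ℝ :=
  pathExp M μ α n fun π => φ (π (Fin.last n)) ((List.ofFn π).foldl u m₀)

lemma memExp_succ {g : Mem → A → ℝ} (hg : ∀ h : List Q, α.σ h = g (h.reverse.foldl u m₀))
    (n : ℕ) (φ : Q → Mem → ℝ) :
    memExp M μ α u m₀ (n + 1) φ =
      memExp M μ α u m₀ n fun q m => ∑ x, (∑ a, g m a * M.δ q a x) * φ x (u m x) := by
  unfold memExp
  rw [pathExp_succ]
  congr 1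
  funext π
  simp only [hg, List.reverse_reverse, Fin.snoc_last, List.foldl_ofFn_snoc]

lemma memExp_add (n : ℕ) (φ ψ : Q → Mem → ℝ) :
    memExp M μ α u m₀ n (φ + ψ) = memExp M μ α u m₀ n φ + memExp M μ α u m₀ n ψ :=
  pathExp_add M μ α _ _

variable [DecidableEq Q]

noncomputable def memExpAt (n : ℕ) (q : Q) (f : Mem → ℝ) : ℝ :=
  memExp M μ α u m₀ n fun q' m => if q' = q then f m else 0

lemma memExpAt_one (n : ℕ) (q : Q) : memExpAt M μ α u m₀ n q (fun _ => 1) = Mdist M μ α n q :=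
  (Mdist_eq_pathExp M μ α n q).symm

lemma memExpAt_mono {μ : Q → ℝ} (hμ : ∀ q, 0 ≤ μ q) (n : ℕ) (q : Q) {f f' : Mem → ℝ}
    (h : ∀ m, f m ≤ f' m) : memExpAt M μ α u m₀ n q f ≤ memExpAt M μ α u m₀ n q f' :=
  pathExp_mono M α hμ fun π => by dsimp only; split_ifs <;> simp [h]

lemma memExpAt_nonneg {μ : Q → ℝ} (hμ : ∀ q, 0 ≤ μ q) (n : ℕ) (q : Q) {f : Mem → ℝ}
    (hf : ∀ m, 0 ≤ f m) : 0 ≤ memExpAt M μ α u m₀ n q f :=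
  Finset.sum_nonneg fun π _ =>
    mul_nonneg (pathProb_nonneg_s15 M α hμ π) (by dsimp only; split_ifs <;> simp [hf])

lemma memExpAt_zero_of_ne {q₀ q : Q} (h : q ≠ q₀) (f : Mem → ℝ) :
    memExpAt M (dirac q₀) α u m₀ 0 q f = 0 := by
  simp [memExpAt, memExp, pathExp_zero, dirac, h]

end FiniteMemory

-- `FinMem` constrains `g` only on reachable memory states; elsewhere it may be junk.
lemma FinMem.exists_isDist {Q A : Type} [Fintype A] {α : Strat Q A} (hα : FinMem α) :
    ∃ (N : ℕ) (u : Fin (N + 1) → Q → Fin (N + 1)) (m₀ : Fin (N + 1)) (g : Fin (N + 1) → A → ℝ),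
      (∀ m, IsDist (g m)) ∧ ∀ h, α.σ h = g (h.reverse.foldl u m₀) := by
  classical
  obtain ⟨N, u, m₀, g, hg⟩ := hα
  refine ⟨N, u, m₀, fun m => if IsDist (g m) then g m else α.σ [], fun m => ?_, fun h => ?_⟩
  · dsimp only
    split_ifs with hm
    exacts [hm, α.isDist []]
  · dsimp only
    rw [if_pos (hg h ▸ α.isDist h), hg h]

noncomputable def markovStrat {Q A : Type} [Fintype A] [DecidableEq A] (act : ℕ → A) :
    Strat Q A where
  σ h := dirac (act h.length)
  nonneg _ := (isDist_dirac _).1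
  sum_one _ := (isDist_dirac _).2

lemma Mdist_markovStrat_succ {Q A : Type} [Fintype Q] [DecidableEq Q] [Fintype A] [DecidableEq A]
    (M : MDP Q A) (μ : Q → ℝ) (act : ℕ → A) (n : ℕ) (q' : Q) :
    Mdist M μ (markovStrat act) (n + 1) q' =
      ∑ q, Mdist M μ (markovStrat act) n q * M.δ q (act (n + 1)) q' :=
  Mdist_succ_eq_sum M μ _ (fun q => M.δ q (act (n + 1)) q') fun π => by
    simp [markovStrat, dirac]

/-- States q₀, q₁, q₂ are `0, 1, 2` and actions a, b are `0, 1`. -/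
noncomputable def exampleδ : Fin 3 → Fin 2 → Fin 3 → ℝ := fun q a q' =>
  if q = 0 then (if q' = 0 ∨ q' = 1 then (1 : ℝ) / 2 else 0)
  else if q = 1 then
    (if a = 0 then (if q' = 1 then 1 else 0) else (if q' = 2 then 1 else 0))
  else (if q' = 0 then 1 else 0)

lemma sum_mul_exampleδ_q₀ {w : Fin 2 → ℝ} (hw : ∑ a, w a = 1) (q : Fin 3) :
    ∑ a, w a * exampleδ q a 0 = (if q = 0 then 1 / 2 else 0) + if q = 2 then 1 else 0 := by
  rw [Fin.sum_univ_two] at hw ⊢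
  fin_cases q <;> simp [exampleδ] <;> linarith

lemma sum_mul_exampleδ_q₁ {w : Fin 2 → ℝ} (hw : ∑ a, w a = 1) (q : Fin 3) :
    ∑ a, w a * exampleδ q a 1 = if q = 0 then 1 / 2 else if q = 1 then w 0 else 0 := by
  rw [Fin.sum_univ_two] at hw ⊢
  fin_cases q <;> simp [exampleδ]
  linarith

lemma sum_mul_exampleδ_q₂ (w : Fin 2 → ℝ) (q : Fin 3) :
    ∑ a, w a * exampleδ q a 2 = if q = 1 then w 1 else 0 := by
  rw [Fin.sum_univ_two]
  fin_cases q <;> simp [exampleδ]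

lemma Mdist_succ_q₀ {M : MDP (Fin 3) (Fin 2)} (hδ : M.δ = exampleδ) (μ : Fin 3 → ℝ)
    (α : Strat (Fin 3) (Fin 2)) (n : ℕ) :
    Mdist M μ α (n + 1) 0 = 1 / 2 * Mdist M μ α n 0 + Mdist M μ α n 2 := by
  rw [Mdist_succ_eq_sum M μ α (fun q => (if q = 0 then 1 / 2 else 0) + if q = 2 then 1 else 0)
    fun π => hδ ▸ sum_mul_exampleδ_q₀ (α.sum_one _) _]
  simp [Fin.sum_univ_three]
  ring

section Stay

variable {Mem : Type} (o : Mem → Mem) (p : Mem → ℝ)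

noncomputable def stayProb (m : Mem) (k : ℕ) : ℝ :=
  ∏ j ∈ Finset.range k, p (o^[j + 1] m)

lemma stayProb_zero (m : Mem) : stayProb o p m 0 = 1 := Finset.prod_range_zero _

lemma stayProb_succ (m : Mem) (k : ℕ) :
    stayProb o p m (k + 1) = stayProb o p m k * p (o^[k + 1] m) :=
  Finset.prod_range_succ _ _

variable {p}

lemma stayProb_nonneg (hp₀ : ∀ m, 0 ≤ p m) (m : Mem) (k : ℕ) : 0 ≤ stayProb o p m k :=
  Finset.prod_nonneg fun _ _ => hp₀ _

lemma stayProb_le_one (hp₀ : ∀ m, 0 ≤ p m) (hp₁ : ∀ m, p m ≤ 1) (m : Mem) (k : ℕ) :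
    stayProb o p m k ≤ 1 :=
  Finset.prod_le_one (fun _ _ => hp₀ _) fun _ _ => hp₁ _

lemma stayProb_antitone (hp₀ : ∀ m, 0 ≤ p m) (hp₁ : ∀ m, p m ≤ 1) (m : Mem) :
    Antitone (stayProb o p m) := by
  refine antitone_nat_of_succ_le fun k => ?_
  rw [stayProb_succ]
  exact mul_le_of_le_one_right (stayProb_nonneg o hp₀ m k) (hp₁ _)

end Stay

/-- The probability that a run entering q₁ with memory `m` plays a for exactly `k` steps and
then b, the memory inside q₁ evolving by `o`. -/
noncomputable def exitProb {Mem : Type} (o : Mem → Mem) (g : Mem → Fin 2 → ℝ) (m : Mem) (k : ℕ) :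
    ℝ :=
  stayProb o (g · 0) m k * g (o^[k + 1] m) 1

section ExitProb

variable {Mem : Type} (o : Mem → Mem) {g : Mem → Fin 2 → ℝ}

lemma exitProb_nonneg (hgd : ∀ m, IsDist (g m)) (m : Mem) (k : ℕ) : 0 ≤ exitProb o g m k :=
  mul_nonneg (stayProb_nonneg o (fun m => (hgd m).1 0) m k) ((hgd _).1 1)

lemma exitProb_le_one (hgd : ∀ m, IsDist (g m)) (m : Mem) (k : ℕ) : exitProb o g m k ≤ 1 :=
  mul_le_one₀ (stayProb_le_one o (fun m => (hgd m).1 0) (fun m => (hgd m).le_one 0) m k)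
    ((hgd _).1 1) ((hgd _).le_one 1)

lemma exitProb_add_le (hgd : ∀ m, IsDist (g m)) {K d : ℕ} (hper : ∀ k, K ≤ k → o^[k + d] = o^[k])
    (m : Mem) {k : ℕ} (hk : K ≤ k) : exitProb o g m (k + d) ≤ exitProb o g m k := by
  rw [exitProb, exitProb, add_right_comm, hper (k + 1) (by omega)]
  exact mul_le_mul_of_nonneg_right
    (stayProb_antitone o (fun m => (hgd m).1 0) (fun m => (hgd m).le_one 0) m (by omega))
    ((hgd _).1 1)

end ExitProb

section Example

variable {Mem : Type} {M : MDP (Fin 3) (Fin 2)} {α : Strat (Fin 3) (Fin 2)}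
  {u : Mem → Fin 3 → Mem} {m₀ : Mem} {g : Mem → Fin 2 → ℝ}

local notation "E" => memExpAt M (dirac (0 : Fin 3)) α u m₀

local notation "P" => Mdist M (dirac (0 : Fin 3)) α

lemma Mdist_q₀_add_Mdist_q₂_le_one (n : ℕ) : P n 0 + P n 2 ≤ 1 := by
  have h := sum_Mdist M α (isDist_dirac 0) n
  rw [Fin.sum_univ_three] at h
  linarith [Mdist_nonneg M α (isDist_dirac 0).1 n 1]

lemma Mdist_q₀_le_two_pow_mul (hδ : M.δ = exampleδ) (t s : ℕ) : P t 0 ≤ 2 ^ s * P (t + s) 0 := by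
  induction s with
  | zero => simp
  | succ s ih =>
    have h := Mdist_succ_q₀ hδ (dirac 0) α (t + s)
    have := Mdist_nonneg M α (isDist_dirac 0).1 (t + s) 2
    rw [← add_assoc, h, pow_succ]
    nlinarith [pow_pos (two_pos (α := ℝ)) s]

lemma Mdist_q₀_le_two_pow_mul_of_le (hδ : M.δ = exampleδ) {t N W : ℕ} (htN : t ≤ N)
    (hNt : N ≤ t + W) :
    P t 0 ≤ 2 ^ W * P N 0 := by
  obtain ⟨s, rfl⟩ := Nat.exists_eq_add_of_le htN
  calc P t 0 ≤ 2 ^ s * P (t + s) 0 := Mdist_q₀_le_two_pow_mul hδ t s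
    _ ≤ 2 ^ W * P (t + s) 0 :=
      mul_le_mul_of_nonneg_right (pow_le_pow_right₀ one_le_two (by omega))
        (Mdist_nonneg M α (isDist_dirac 0).1 _ 0)

lemma Mdist_q₂_le_Mdist_q₀_succ (hδ : M.δ = exampleδ) (n : ℕ) : P n 2 ≤ P (n + 1) 0 := by
  rw [Mdist_succ_q₀ hδ]
  linarith [Mdist_nonneg M α (isDist_dirac 0).1 n 0]

lemma memExpAt_succ_q₁ (hδ : M.δ = exampleδ) (hg : ∀ h, α.σ h = g (h.reverse.foldl u m₀))
    (hgd : ∀ m, IsDist (g m)) (n : ℕ) (f : Mem → ℝ) :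
    E (n + 1) 1 f = E n 0 (fun m => 1 / 2 * f (u m 1)) + E n 1 (fun m => g m 0 * f (u m 1)) := by
  rw [memExpAt, memExp_succ M _ α u m₀ hg, memExpAt, memExpAt, ← memExp_add]
  congr 1
  funext q m
  simp only [mul_ite, mul_zero, Finset.sum_ite_eq', Finset.mem_univ, if_true, hδ,
    sum_mul_exampleδ_q₁ (hgd m).2, Pi.add_apply]
  fin_cases q <;> simp

lemma Mdist_succ_q₂ (hδ : M.δ = exampleδ) (hg : ∀ h, α.σ h = g (h.reverse.foldl u m₀))
    (n : ℕ) : P (n + 1) 2 = E n 1 (fun m => g m 1) := by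
  rw [← memExpAt_one, memExpAt, memExp_succ M _ α u m₀ hg, memExpAt]
  congr 1
  funext q m
  simp only [mul_ite, mul_one, mul_zero, Finset.sum_ite_eq', Finset.mem_univ, if_true, hδ,
    sum_mul_exampleδ_q₂]

lemma memExpAt_succ_q₁_eq_sum (hδ : M.δ = exampleδ) (hg : ∀ h, α.σ h = g (h.reverse.foldl u m₀))
    (hgd : ∀ m, IsDist (g m)) (n : ℕ) (f : Mem → ℝ) :
    E (n + 1) 1 f = ∑ p ∈ antidiagonal n,
      E p.1 0 (fun m => 1 / 2 * stayProb (u · 1) (g · 0) m p.2 * f ((u · 1)^[p.2 + 1] m)) := by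
  induction n generalizing f with
  | zero =>
    rw [memExpAt_succ_q₁ hδ hg hgd, memExpAt_zero_of_ne _ _ _ _ (by decide : (1 : Fin 3) ≠ 0),
      add_zero]
    simp [stayProb_zero]
  | succ n ih =>
    rw [memExpAt_succ_q₁ hδ hg hgd, ih, Finset.Nat.sum_antidiagonal_succ']
    refine congrArg₂ (· + ·) (by simp [stayProb_zero]) (Finset.sum_congr rfl fun p _ => ?_)
    refine congrArg _ (funext fun m => ?_)
    rw [stayProb_succ, Function.iterate_succ_apply' _ (p.2 + 1)]
    ring

lemma Mdist_q₂_eq_sum_exitProb (hδ : M.δ = exampleδ)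
    (hg : ∀ h, α.σ h = g (h.reverse.foldl u m₀)) (hgd : ∀ m, IsDist (g m)) (n : ℕ) :
    P (n + 2) 2 =
      ∑ t ∈ Finset.range (n + 1), E t 0 (fun m => 1 / 2 * exitProb (u · 1) g m (n - t)) := by
  rw [Mdist_succ_q₂ hδ hg, memExpAt_succ_q₁_eq_sum hδ hg hgd, ← Nat.succ_eq_add_one,
    ← Finset.Nat.sum_antidiagonal_eq_sum_range_succ
      (fun t k => E t 0 (fun m => 1 / 2 * exitProb (u · 1) g m k))]
  simp only [exitProb, mul_assoc]

lemma Mdist_q₂_add_period_le (hδ : M.δ = exampleδ)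
    (hg : ∀ h, α.σ h = g (h.reverse.foldl u m₀)) (hgd : ∀ m, IsDist (g m)) {K d : ℕ}
    (hper : ∀ k, K ≤ k → (u · 1)^[k + d] = (u · 1)^[k]) (m : ℕ) :
    P (m + K + d + 2) 2 ≤
      P (m + K + 2) 2 + (K + d : ℕ) * (2 ^ (K + d + 1) * P (m + K + d + 2) 0) := by
  set w : ℕ → ℕ → ℝ := fun t k => E t 0 (fun m => 1 / 2 * exitProb (u · 1) g m k)
  have w_nonneg : ∀ t k, 0 ≤ w t k := fun t k =>
    memExpAt_nonneg M α u m₀ (isDist_dirac 0).1 t 0 fun m =>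
      mul_nonneg (by norm_num) (exitProb_nonneg _ hgd m k)
  have w_le : ∀ t k, w t k ≤ P t 0 := fun t k =>
    (memExpAt_mono M α u m₀ (isDist_dirac 0).1 t 0 fun m => by
      linarith [exitProb_le_one (u · 1) hgd m k, exitProb_nonneg (u · 1) hgd m k]).trans_eq
    (memExpAt_one M _ α u m₀ t 0)
  have w_add_le : ∀ t k, K ≤ k → w t (k + d) ≤ w t k := fun t k hk =>
    memExpAt_mono M α u m₀ (isDist_dirac 0).1 t 0 fun m =>
      mul_le_mul_of_nonneg_left (exitProb_add_le _ hgd hper m hk) (by norm_num)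
  rw [Mdist_q₂_eq_sum_exitProb hδ hg hgd, Mdist_q₂_eq_sum_exitProb hδ hg hgd,
    show m + K + d + 1 = (m + 1) + (K + d) by ring, Finset.sum_range_add]
  gcongr ?_ + ?_
  · calc ∑ t ∈ Finset.range (m + 1), w t (m + K + d - t)
        ≤ ∑ t ∈ Finset.range (m + 1), w t (m + K - t) :=
          Finset.sum_le_sum fun t ht => by
            rw [Finset.mem_range] at ht
            rw [show m + K + d - t = m + K - t + d by omega]
            exact w_add_le t _ (by omega)
      _ ≤ ∑ t ∈ Finset.range (m + K + 1), w t (m + K - t) :=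
          Finset.sum_le_sum_of_subset_of_nonneg (Finset.range_subset_range.2 (by omega))
            fun t _ _ => w_nonneg t _
  · calc ∑ i ∈ Finset.range (K + d), w (m + 1 + i) (m + K + d - (m + 1 + i))
        ≤ ∑ i ∈ Finset.range (K + d), 2 ^ (K + d + 1) * P (m + K + d + 2) 0 :=
          Finset.sum_le_sum fun i hi => by
            rw [Finset.mem_range] at hi
            exact (w_le _ _).trans (Mdist_q₀_le_two_pow_mul_of_le hδ (by omega) (by omega))
      _ = _ := by simp

lemma exists_Mdist_q₂_le_mul_Mdist_q₀ [Finite Mem] (hδ : M.δ = exampleδ)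
    (hg : ∀ h, α.σ h = g (h.reverse.foldl u m₀)) (hgd : ∀ m, IsDist (g m)) :
    ∃ C, 0 ≤ C ∧ ∀ n, P n 2 ≤ C * P n 0 := by
  obtain ⟨K, d, hd, hper⟩ := Function.exists_iterate_add_eq (u · 1)
  refine ⟨(K + d + 1 : ℕ) * 2 ^ (K + d + 1), by positivity, fun n => ?_⟩
  have hX := Mdist_nonneg M α (isDist_dirac 0).1 n 0
  rcases le_or_gt n (K + d + 1) with hn | hn
  · calc P n 2 ≤ 1 := by linarith [Mdist_q₀_add_Mdist_q₂_le_one (M := M) (α := α) n]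
      _ = P 0 0 := by simp [Mdist_zero, dirac]
      _ ≤ 2 ^ (K + d + 1) * P n 0 := Mdist_q₀_le_two_pow_mul_of_le hδ (Nat.zero_le n) (by omega)
      _ ≤ (K + d + 1 : ℕ) * 2 ^ (K + d + 1) * P n 0 := by
          gcongr
          exact le_mul_of_one_le_left (by positivity) (by norm_cast; omega)
  · obtain ⟨m, rfl⟩ : ∃ m, n = m + K + d + 2 := ⟨n - (K + d + 2), by omega⟩
    have h₁ := Mdist_q₂_add_period_le hδ hg hgd hper m
    have h₂ : P (m + K + 2) 2 ≤ 2 ^ (K + d + 1) * P (m + K + d + 2) 0 :=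
      (Mdist_q₂_le_Mdist_q₀_succ hδ _).trans
        (Mdist_q₀_le_two_pow_mul_of_le hδ (by omega) (by omega))
    calc P (m + K + d + 2) 2 ≤ 2 ^ (K + d + 1) * P (m + K + d + 2) 0
          + (K + d : ℕ) * (2 ^ (K + d + 1) * P (m + K + d + 2) 0) := by linarith
      _ = _ := by push_cast; ring

end Example

open Classical in
noncomputable def powTwoAct (ℓ : ℕ) : Fin 2 := if ∃ j, ℓ = 2 ^ j then 1 else 0

lemma powTwoAct_two_pow (j : ℕ) : powTwoAct (2 ^ j) = 1 := if_pos ⟨j, rfl⟩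

lemma powTwoAct_eq_zero {j ℓ : ℕ} (h₁ : 2 ^ j < ℓ) (h₂ : ℓ < 2 ^ (j + 1)) : powTwoAct ℓ = 0 := by
  refine if_neg ?_
  rintro ⟨i, rfl⟩
  have := (Nat.pow_lt_pow_iff_right (by norm_num)).1 h₁
  have := (Nat.pow_lt_pow_iff_right (by norm_num)).1 h₂
  omega

section Markov

variable {M : MDP (Fin 3) (Fin 2)} {act : ℕ → Fin 2}

local notation "P" => Mdist M (dirac (0 : Fin 3)) (markovStrat act)

lemma Mdist_succ_q₂_markovStrat (hδ : M.δ = exampleδ) (n : ℕ) :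
    P (n + 1) 2 = if act (n + 1) = 1 then P n 1 else 0 := by
  rw [Mdist_markovStrat_succ, Fin.sum_univ_three, hδ]
  rcases Fin.exists_fin_two.1 ⟨act (n + 1), rfl⟩ with h | h <;> simp [exampleδ, h]

lemma potential_succ_of_act_eq_zero (hδ : M.δ = exampleδ) {n : ℕ} (h : act (n + 1) = 0) :
    P (n + 1) 0 + 2 * P (n + 1) 2 = (P n 0 + 2 * P n 2) / 2 := by
  rw [Mdist_succ_q₀ hδ, Mdist_succ_q₂_markovStrat hδ, h, if_neg (by decide)]
  ring

lemma potential_add_le (hδ : M.δ = exampleδ) {s k : ℕ} (h : ∀ i < k, act (s + i + 1) = 0) :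
    P (s + k) 0 + 2 * P (s + k) 2 ≤ 2 * (1 / 2) ^ k := by
  induction k with
  | zero =>
    have := Mdist_q₀_add_Mdist_q₂_le_one (M := M) (α := markovStrat act) s
    simp only [add_zero, pow_zero]
    linarith [Mdist_nonneg M (markovStrat act) (isDist_dirac 0).1 s 0]
  | succ k ih =>
    rw [← add_assoc, potential_succ_of_act_eq_zero hδ (h k (by omega)), pow_succ]
    linarith [ih fun i hi => h i (by omega)]

lemma one_sub_le_Mdist_q₂ (hδ : M.δ = exampleδ) {s k : ℕ} (ha : ∀ i < k, act (s + i + 1) = 0)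
    (hb : act (s + k + 1) = 1) : 1 - 2 * (1 / 2) ^ k ≤ P (s + k + 1) 2 := by
  have h := sum_Mdist M (markovStrat act) (isDist_dirac 0) (s + k)
  rw [Fin.sum_univ_three] at h
  rw [Mdist_succ_q₂_markovStrat hδ, if_pos hb]
  linarith [potential_add_le hδ ha, Mdist_nonneg M (markovStrat act) (isDist_dirac 0).1 (s + k) 2]

end Markov

lemma exists_one_sub_le_Mdist_q₂ {M : MDP (Fin 3) (Fin 2)} (hδ : M.δ = exampleδ) {ε : ℝ}
    (hε : 0 < ε) : ∃ n, 1 - ε ≤ Mdist M (dirac 0) (markovStrat powTwoAct) n 2 := by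
  obtain ⟨k, hk⟩ := exists_pow_lt_of_lt_one (half_pos hε) (by norm_num : (1 / 2 : ℝ) < 1)
  have hk' : k < 2 ^ (k + 1) - 1 := by
    have := Nat.lt_two_pow_self (n := k + 1)
    omega
  have hlast : 2 ^ (k + 1) + (2 ^ (k + 1) - 1) + 1 = 2 ^ (k + 2) := by
    rw [pow_succ 2 (k + 1)]
    omega
  refine ⟨_, le_trans ?_ (one_sub_le_Mdist_q₂ hδ (s := 2 ^ (k + 1)) (k := 2 ^ (k + 1) - 1)
    (fun i hi => powTwoAct_eq_zero (j := k + 1) (by omega) (by rw [pow_succ 2 (k + 1)]; omega))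
    (hlast ▸ powTwoAct_two_pow _))⟩
  have := pow_le_pow_of_le_one (by norm_num : (0 : ℝ) ≤ 1 / 2) (by norm_num) hk'.le
  linarith

lemma FinMem.exists_lt_one_Mdist_q₂_le {M : MDP (Fin 3) (Fin 2)} (hδ : M.δ = exampleδ)
    {α : Strat (Fin 3) (Fin 2)} (hα : FinMem α) :
    ∃ c < 1, ∀ n, Mdist M (dirac 0) α n 2 ≤ c := by
  obtain ⟨N, u, m₀, g, hgd, hg⟩ := hα.exists_isDist
  obtain ⟨C, hC, hZ⟩ := exists_Mdist_q₂_le_mul_Mdist_q₀ hδ hg hgd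
  refine ⟨C / (1 + C), (div_lt_one (by linarith)).2 (by linarith), fun n => ?_⟩
  rw [le_div_iff₀ (by linarith)]
  nlinarith [hZ n, Mdist_q₀_add_Mdist_q₂_le_one (M := M) (α := α) n]

/-- In the 3-state MDP with `δ(q₀,·) = ½q₀ + ½q₁`, `δ(q₁,a) = q₁`, `δ(q₁,b) = q₂`,
`δ(q₂,·) = q₀`, started at `q₀`: every finite-memory strategy has
`sup_n M^α_n({q₂}) < 1`, while some (infinite-memory) strategy achieves
`sup_n M^α_n({q₂}) = 1`. Hence almost-sure eventually synchronizing strategies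
require infinite memory. -/
theorem infinite_memory_needed_for_almost_sure
    (M : MDP (Fin 3) (Fin 2))
    (hδ : M.δ = fun q a q' =>
      if q = 0 then (if q' = 0 ∨ q' = 1 then (1 : ℝ) / 2 else 0)
      else if q = 1 then
        (if a = 0 then (if q' = 1 then 1 else 0) else (if q' = 2 then 1 else 0))
      else (if q' = 0 then 1 else 0)) :
    (∀ α : Strat (Fin 3) (Fin 2), FinMem α →
      ∃ c : ℝ, c < 1 ∧ ∀ n : ℕ, Mmass M (dirac 0) α n {2} ≤ c) ∧
    (∃ α : Strat (Fin 3) (Fin 2), ∀ ε : ℝ, 0 < ε →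
      ∃ n : ℕ, 1 - ε ≤ Mmass M (dirac 0) α n {2}) := by
  simp only [Mmass, Finset.sum_singleton]
  exact ⟨fun α hα => hα.exists_lt_one_Mdist_q₂_le hδ,
    markovStrat powTwoAct, fun ε hε => exists_one_sub_le_Mdist_q₂ hδ hε⟩
end
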